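/- Under the weighted-ensemble selection in a single bin u (multinomial resampling of N(u) children with probabilities ω_i/ω(u), children weights ω(u)/N(u)), the second moment satisfies E[(sum over children of (ω(u)/N(u)) g_{parent})^2] = (1 - 1/N(u)) (sum_i ω_i g_i)^2 + (ω(u)/N(u)) sum_i ω_i g_i^2. -/

import Mathlib

/-!
With `∑ p = 1` and `S = ∑ pᵢ aᵢ`, the multinomial theorem expands
`(1 + S X)^M = (∑ pᵢ (1 + aᵢ X))^M` as the expectation of `∏ (1 + aᵢ X)^{kᵢ}` over the
multinomial distribution of the counts `k`. The coefficients of `X` and `X²` of that product are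
`∑ kᵢ aᵢ` and `((∑ kᵢ aᵢ)² - ∑ kᵢ aᵢ²) / 2`, so comparing them with `M S` and `M (M - 1) S² / 2`
gives the first two moments of `∑ kᵢ aᵢ`. The theorem is the second moment for `pᵢ = ωᵢ / ω(u)`
and `aᵢ = gᵢ`, rescaled by `(ω(u) / N(u))²`.
-/

open scoped BigOperators

/-- The multinomial probability mass function with `M` trials and event
probabilities `p : Fin n → ℝ`, evaluated at a count vector `v : Fin n → ℕ`. -/
noncomputable def multinomialPMF (n M : ℕ) (p : Fin n → ℝ) (v : Fin n → ℕ) : ℝ :=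
  if (∑ i, v i) = M then
    (Nat.factorial M : ℝ) / (∏ i, (Nat.factorial (v i) : ℝ)) * ∏ i, p i ^ v i
  else 0

open Finset Polynomial

namespace Polynomial

section Semiring

variable {R : Type*} [Semiring R]

lemma coeff_mul_one_eq (f g : R[X]) :
    (f * g).coeff 1 = f.coeff 0 * g.coeff 1 + f.coeff 1 * g.coeff 0 := by
  simp [coeff_mul, Nat.sum_antidiagonal_eq_sum_range_succ_mk, sum_range_succ]

lemma coeff_mul_two_eq (f g : R[X]) :
    (f * g).coeff 2 = f.coeff 0 * g.coeff 2 + f.coeff 1 * g.coeff 1 + f.coeff 2 * g.coeff 0 := by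
  simp [coeff_mul, Nat.sum_antidiagonal_eq_sum_range_succ_mk, sum_range_succ, add_assoc]

end Semiring

variable {R : Type*} [CommRing R]

lemma coeff_prod_one_add_C_mul_X {ι : Type*} (s : Finset ι) (a : ι → R) :
    (∏ i ∈ s, (1 + C (a i) * X)).coeff 0 = 1 ∧
    (∏ i ∈ s, (1 + C (a i) * X)).coeff 1 = ∑ i ∈ s, a i ∧
    2 * (∏ i ∈ s, (1 + C (a i) * X)).coeff 2 = (∑ i ∈ s, a i) ^ 2 - ∑ i ∈ s, a i ^ 2 := by
  induction s using Finset.cons_induction with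
  | empty => simp [coeff_one]
  | cons j s _ ih =>
    obtain ⟨h0, h1, h2⟩ := ih
    rw [prod_cons, sum_cons, sum_cons, coeff_mul_one_eq, coeff_mul_two_eq, mul_coeff_zero,
      h0, h1]
    refine ⟨by simp, by simp [coeff_one]; ring, ?_⟩
    simp only [coeff_add, coeff_one, coeff_C_mul_X]
    norm_num
    linear_combination h2

lemma coeff_prod_one_add_C_mul_X_pow {ι : Type*} (s : Finset ι) (a : ι → R) (k : ι → ℕ) :
    (∏ i ∈ s, (1 + C (a i) * X) ^ k i).coeff 1 = ∑ i ∈ s, k i * a i ∧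
    2 * (∏ i ∈ s, (1 + C (a i) * X) ^ k i).coeff 2 =
      (∑ i ∈ s, k i * a i) ^ 2 - ∑ i ∈ s, k i * a i ^ 2 := by
  have hprod : ∏ i ∈ s, (1 + C (a i) * X) ^ k i =
      ∏ x ∈ s.sigma fun i => range (k i), (1 + C (a x.1) * X) := by
    rw [prod_sigma]; simp
  have hsum (b : ι → R) : ∑ i ∈ s, k i * b i = ∑ x ∈ s.sigma fun i => range (k i), b x.1 := by
    rw [sum_sigma]; simp
  obtain ⟨-, h1, h2⟩ := coeff_prod_one_add_C_mul_X (s.sigma fun i => range (k i)) (a ·.1)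
  rw [hprod, hsum, hsum]
  exact ⟨h1, h2⟩

lemma coeff_one_add_C_mul_X_pow (c : R) (M : ℕ) :
    ((1 + C c * X) ^ M).coeff 1 = M * c ∧
    2 * ((1 + C c * X) ^ M).coeff 2 = (M * c) ^ 2 - M * c ^ 2 := by
  simpa using coeff_prod_one_add_C_mul_X_pow (univ : Finset Unit) (fun _ => c) fun _ => M

end Polynomial

section MultinomialMoments

variable {ι : Type*} [Fintype ι]

def multinomialWeight {R : Type*} [CommSemiring R] (p : ι → R) (k : ι → ℕ) : R :=
  Nat.multinomial univ k * ∏ i, p i ^ k i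

variable {R : Type*} [DecidableEq ι] [CommRing R]

lemma one_add_C_mul_X_pow_eq_sum_multinomialWeight (p a : ι → R) (hp : ∑ i, p i = 1) (M : ℕ) :
    (1 + C (∑ i, p i * a i) * X) ^ M =
      ∑ k ∈ piAntidiag univ M, C (multinomialWeight p k) * ∏ i, (1 + C (a i) * X) ^ k i := by
  have hsplit : 1 + C (∑ i, p i * a i) * X = ∑ i, C (p i) * (1 + C (a i) * X) := by
    simp only [mul_add, mul_one, sum_add_distrib, ← map_sum, hp, map_one, ← mul_assoc, ← map_mul,
      ← sum_mul]
  rw [hsplit, sum_pow_eq_sum_piAntidiag]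
  refine sum_congr rfl fun k _ => ?_
  simp only [multinomialWeight, mul_pow, prod_mul_distrib, map_mul, map_prod, map_pow, map_natCast,
    mul_assoc]

lemma sum_multinomialWeight_mul_sum_mul (p a : ι → R) (hp : ∑ i, p i = 1) (M : ℕ) :
    ∑ k ∈ piAntidiag univ M, multinomialWeight p k * ∑ i, k i * a i = M * ∑ i, p i * a i := by
  have h := congr_arg (coeff · 1) (one_add_C_mul_X_pow_eq_sum_multinomialWeight p a hp M)
  simp only [finsetSum_coeff, coeff_C_mul, (coeff_prod_one_add_C_mul_X_pow _ _ _).1,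
    (coeff_one_add_C_mul_X_pow _ _).1] at h
  exact h.symm

lemma sum_multinomialWeight_mul_sq_sum_mul (p a : ι → R) (hp : ∑ i, p i = 1) (M : ℕ) :
    ∑ k ∈ piAntidiag univ M, multinomialWeight p k * (∑ i, k i * a i) ^ 2 =
      ((M : R) ^ 2 - M) * (∑ i, p i * a i) ^ 2 + M * ∑ i, p i * a i ^ 2 := by
  have h := congr_arg (2 * coeff · 2) (one_add_C_mul_X_pow_eq_sum_multinomialWeight p a hp M)
  simp only [finsetSum_coeff, coeff_C_mul, (coeff_one_add_C_mul_X_pow _ _).2] at h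
  rw [mul_sum _ _ (2 : R)] at h
  simp only [mul_left_comm (2 : R), (coeff_prod_one_add_C_mul_X_pow _ _ _).2, mul_sub,
    sum_sub_distrib] at h
  linear_combination -h + sum_multinomialWeight_mul_sum_mul p (a · ^ 2) hp M

end MultinomialMoments

lemma multinomialPMF_eq_multinomialWeight {n M : ℕ} (p : Fin n → ℝ) {v : Fin n → ℕ}
    (hv : v ∈ piAntidiag univ M) : multinomialPMF n M p v = multinomialWeight p v := by
  have hsum : ∑ i, v i = M := (mem_piAntidiag.mp hv).1
  have hfact : (0 : ℝ) < ∏ i, ((v i).factorial : ℝ) := prod_pos fun i _ => by positivity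
  rw [multinomialPMF, if_pos hsum, multinomialWeight, ← hsum, ← Nat.multinomial_spec univ v,
    Nat.cast_mul, Nat.cast_prod, mul_div_cancel_left₀ _ hfact.ne']

lemma tsum_multinomialPMF_mul {n : ℕ} (M : ℕ) (p : Fin n → ℝ) (f : (Fin n → ℕ) → ℝ) :
    ∑' v, multinomialPMF n M p v * f v =
      ∑ v ∈ piAntidiag univ M, multinomialWeight p v * f v := by
  rw [tsum_eq_sum fun v hv => ?_]
  · exact sum_congr rfl fun v hv => by rw [multinomialPMF_eq_multinomialWeight p hv]
  · have hsum : ∑ i, v i ≠ M := fun h => hv (mem_piAntidiag.mpr ⟨h, fun i _ => mem_univ i⟩)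
    rw [multinomialPMF, if_neg hsum, zero_mul]

/-- Second moment of the weighted-ensemble selection step in one bin:
`E[((ω(u)/N(u)) ∑ C_i g_i)²] = (1 - 1/N(u)) (∑ ω_i g_i)² + (ω(u)/N(u)) ∑ ω_i g_i²`. -/
theorem selection_second_moment {n : ℕ} (ω g : Fin n → ℝ) (hω : ∀ i, 0 < ω i)
    (Nu : ℕ) (hNu : 1 ≤ Nu) :
    ∑' v : Fin n → ℕ,
        multinomialPMF n Nu (fun i => ω i / ∑ k, ω k) v *
          (((∑ k, ω k) / (Nu : ℝ)) * ∑ i, (v i : ℝ) * g i)^2 =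
      (1 - 1 / (Nu : ℝ)) * (∑ i, ω i * g i)^2 +
        ((∑ k, ω k) / (Nu : ℝ)) * ∑ i, ω i * (g i)^2 := by
  rw [tsum_multinomialPMF_mul]
  rcases isEmpty_or_nonempty (Fin n) with _ | ⟨⟨i₀⟩⟩
  · simp [Nat.one_le_iff_ne_zero.mp hNu]
  set W := ∑ k, ω k
  have hW : 0 < W := sum_pos (fun i _ => hω i) ⟨i₀, mem_univ i₀⟩
  have hp : ∑ i, ω i / W = 1 := by rw [← sum_div, div_self hW.ne']
  have hN : (Nu : ℝ) ≠ 0 := by positivity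
  calc ∑ v ∈ piAntidiag univ Nu, multinomialWeight (ω · / W) v * (W / Nu * ∑ i, v i * g i) ^ 2
      = (W / Nu) ^ 2 * ∑ v ∈ piAntidiag univ Nu,
          multinomialWeight (ω · / W) v * (∑ i, v i * g i) ^ 2 := by
        rw [mul_sum]; exact sum_congr rfl fun v _ => by ring
    _ = (W / Nu) ^ 2 * (((Nu : ℝ) ^ 2 - Nu) * (∑ i, ω i / W * g i) ^ 2 +
          Nu * ∑ i, ω i / W * g i ^ 2) := by
        rw [sum_multinomialWeight_mul_sq_sum_mul _ _ hp]
    _ = _ := by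
        simp only [div_mul_eq_mul_div, ← sum_div]
        field_simp
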